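/- Fix γ > 1, α ∈ (0,1), and δ ∈ (0,1). Let (g_t)_{t≥1} be a martingale difference sequence with |g_t| ≤ 1 almost surely, and set S_t = Σ_{i=1}^t g_i² and A_t = (log γ + log(1/α) + log(1 + √(α S_t/2)))² / (0.5·log γ·log(1/α)). Then with probability at least 1 − δ, simultaneously for all t ≥ 1 with S_t > 0: either |Σ_{i=1}^t g_i| ≤ √(2 S_t/α), or Ψ(|Σ_{i=1}^t g_i| / S_t) ≤ (1/(α S_t))·log(A_t/δ), where Ψ(x) = x − log(1+x). -/

import Mathlib

open MeasureTheory Real Set Finset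

/-!
For `0 ≤ λ < 1` and `|x| ≤ 1` one has `exp (λx - Ψ(-λ)x²) ≤ 1 + λx`, so for a martingale difference
sequence bounded by `1` the process `exp (λ Z_t - Ψ(-λ) S_t)` is a nonnegative supermartingale, and
so is its mixture over `λ = exp (b - b/u)`, `u` uniform on `(0, 1)`, `b = log γ`. By Ville's
inequality, with probability `≥ 1 - δ` the mixtures built from `g` and from `-g` stay below `2/δ`
forever. Since `Ψ(Y) = λ* Y - Ψ(-λ*)` for `λ* = Y/(1+Y)` and `Ψ(-·)` is convex, every
`λ ∈ [αλ*, λ*]` makes the exponent at least `α S_t Ψ(|Z_t|/S_t)`. The mixing law gives this interval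
mass `ab/((b+v)(a+b+v)) ≥ ab/(a+b+L)²`, where `a = log (1/α)`, `v = log (1 + S_t/|Z_t|)` and
`L = log (1 + √(α S_t/2)) ≥ v` as soon as `|Z_t| > √(2 S_t/α)`.
-/

namespace MeasureTheory

variable {Ω : Type*} {m0 : MeasurableSpace Ω} {μ : Measure Ω} {ℱ : Filtration ℕ m0}

namespace Supermartingale

variable {f : ℕ → Ω → ℝ}

lemma integral_stoppedValue_le [IsFiniteMeasure μ] (hf : Supermartingale f ℱ μ)
    {τ : Ω → ℕ∞} (hτ : IsStoppingTime ℱ τ) {n : ℕ} (hτn : ∀ ω, τ ω ≤ n) :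
    ∫ ω, stoppedValue f τ ω ∂μ ≤ ∫ ω, f 0 ω ∂μ := by
  have := hf.neg.expected_stoppedValue_mono (isStoppingTime_const ℱ 0) hτ (fun _ => bot_le) hτn
  simpa [stoppedValue, integral_neg] using this

theorem ville [IsFiniteMeasure μ] (hf : Supermartingale f ℱ μ) (hnonneg : 0 ≤ f) {c : ℝ}
    (hc : 0 < c) : μ {ω | ∃ t, c ≤ f t ω} ≤ ENNReal.ofReal ((∫ ω, f 0 ω ∂μ) / c) := by
  rw [ofPred_exists, measure_iUnion_eq_iSup_accumulate]
  refine iSup_le fun n => ?_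
  set τ : Ω → ℕ∞ := fun ω => (hittingBtwn f (Ici c) 0 n ω : ℕ)
  have hτ : IsStoppingTime ℱ τ :=
    hf.stronglyAdapted.adapted.isStoppingTime_hittingBtwn measurableSet_Ici
  have hτn : ∀ ω, τ ω ≤ n := fun ω => by
    simp only [τ]; exact_mod_cast hittingBtwn_le (u := f) (s := Ici c) (n := 0) (m := n) ω
  have hsub : accumulate (fun t => {ω | c ≤ f t ω}) n ⊆ {ω | c ≤ stoppedValue f τ ω} := by
    intro ω hω
    obtain ⟨k, hkn, hk⟩ := mem_accumulate.1 hω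
    exact stoppedValue_hittingBtwn_mem ⟨k, ⟨k.zero_le, hkn⟩, hk⟩
  have hmarkov := mul_meas_ge_le_integral_of_nonneg (.of_forall fun ω => hnonneg _ ω)
    (integrable_stoppedValue ℕ hτ hf.integrable hτn) c
  rw [← ENNReal.ofReal_toReal (measure_ne_top μ _)]
  refine ENNReal.ofReal_le_ofReal ((le_div_iff₀' hc).2 ?_)
  calc c * (μ _).toReal ≤ c * μ.real {ω | c ≤ stoppedValue f τ ω} := by
        gcongr; exact measureReal_mono hsub
    _ ≤ _ := hmarkov.trans (hf.integral_stoppedValue_le hτ hτn)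

end Supermartingale

theorem supermartingale_mixture [IsFiniteMeasure μ] {ι : Type*} {mι : MeasurableSpace ι}
    {ν : Measure ι} [IsFiniteMeasure ν] {F : ι → ℕ → Ω → ℝ}
    (hF : ∀ᵐ u ∂ν, Supermartingale (F u) ℱ μ)
    (hmeas : ∀ t, Measurable[(ℱ t).prod mι] fun p : Ω × ι => F p.2 t p.1)
    (hbdd : ∀ t, ∃ C, ∀ᵐ ω ∂μ, ∀ᵐ u ∂ν, |F u t ω| ≤ C) :
    Supermartingale (fun t ω => ∫ u, F u t ω ∂ν) ℱ μ := by
  have hmeas₀ : ∀ t, Measurable fun p : Ω × ι => F p.2 t p.1 := fun t =>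
    (hmeas t).mono (sup_le_sup_right (MeasurableSpace.comap_mono (ℱ.le t)) _) le_rfl
  have hint : ∀ t (A : Set Ω),
      Integrable (Function.uncurry fun ω u => F u t ω) ((μ.restrict A).prod ν) := by
    intro t A
    obtain ⟨C, hC⟩ := hbdd t
    exact .of_bound (hmeas₀ t).aestronglyMeasurable C
      ((Measure.ae_prod_iff_ae_ae (p := fun p => ‖F p.2 t p.1‖ ≤ C)
        (measurableSet_le (hmeas₀ t).norm measurable_const)).2 (ae_restrict_of_ae hC))
  refine supermartingale_of_setIntegral_succ_le (fun t => ?_) (fun t => ?_) fun t A hA => ?_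
  · -- With `ℱ t` as the ambient σ-algebra on `Ω`, the product instance is `(ℱ t).prod mι`.
    let := ℱ t
    exact (hmeas t).stronglyMeasurable.integral_prod_right'
  · simpa using (hint t univ).integral_prod_left
  · calc ∫ ω in A, ∫ u, F u (t + 1) ω ∂ν ∂μ = ∫ u, ∫ ω in A, F u (t + 1) ω ∂μ ∂ν :=
          integral_integral_swap (hint (t + 1) A)
      _ ≤ ∫ u, ∫ ω in A, F u t ω ∂μ ∂ν :=
          integral_mono_ae (hint (t + 1) A).integral_prod_right (hint t A).integral_prod_right
            (hF.mono fun u hu => hu.setIntegral_le t.le_succ hA)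
      _ = ∫ ω in A, ∫ u, F u t ω ∂ν ∂μ := (integral_integral_swap (hint t A)).symm

lemma ofReal_one_sub_le_measure [IsProbabilityMeasure μ] {s : Set Ω} {δ : ℝ} (hδ : 0 ≤ δ)
    (h : μ sᶜ ≤ ENNReal.ofReal δ) : ENNReal.ofReal (1 - δ) ≤ μ s := by
  rw [ENNReal.ofReal_sub _ hδ, ENNReal.ofReal_one, tsub_le_iff_right, ← measure_univ (μ := μ),
    ← union_compl_self s]
  exact (measure_union_le s sᶜ).trans (by gcongr)

end MeasureTheory

namespace MartingaleConcentration

noncomputable def psi (x : ℝ) : ℝ := x - log (1 + x)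

lemma psi_nonneg {x : ℝ} (hx : -1 < x) : 0 ≤ psi x := by
  have := log_le_sub_one_of_pos (x := 1 + x) (by linarith)
  unfold psi; linarith

@[fun_prop]
lemma measurable_psi : Measurable psi := by
  unfold psi; fun_prop

lemma hasSum_psi {x : ℝ} (hx : |x| < 1) :
    HasSum (fun n : ℕ => (-x) ^ (n + 2) / (n + 2)) (psi x) := by
  have h := (hasSum_nat_add_iff' 1).2
    (hasSum_pow_div_log_of_abs_lt_one (x := -x) (by rwa [abs_neg]))
  simp only [range_one, sum_singleton] at h
  convert h using 1
  · rfl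
  · ext n; push_cast; ring_nf
  · rw [psi]; norm_num; ring_nf

lemma psi_mul_le {l x : ℝ} (hl0 : 0 ≤ l) (hl1 : l < 1) (hx : |x| ≤ 1) :
    psi (l * x) ≤ x ^ 2 * psi (-l) := by
  have hlx : |l * x| < 1 := by
    rw [abs_mul, abs_of_nonneg hl0]; nlinarith [abs_nonneg x]
  refine hasSum_le (fun n => ?_) (hasSum_psi hlx)
    ((hasSum_psi (by rwa [abs_neg, abs_of_nonneg hl0])).mul_left (x ^ 2))
  rw [neg_neg, mul_div_assoc']
  gcongr
  calc (-(l * x)) ^ (n + 2) ≤ |l * x| ^ (n + 2) := by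
        rw [← abs_neg, ← abs_pow]; exact le_abs_self _
    _ = l ^ (n + 2) * |x| ^ (n + 2) := by rw [abs_mul, abs_of_nonneg hl0, mul_pow]
    _ ≤ l ^ (n + 2) * |x| ^ 2 := mul_le_mul_of_nonneg_left
        (pow_le_pow_of_le_one (abs_nonneg x) hx (by omega)) (by positivity)
    _ = x ^ 2 * l ^ (n + 2) := by rw [sq_abs, mul_comm]

lemma exp_mul_sub_psi_neg_mul_sq_le {l x : ℝ} (hl0 : 0 ≤ l) (hl1 : l < 1) (hx : |x| ≤ 1) :
    exp (l * x - psi (-l) * x ^ 2) ≤ 1 + l * x := by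
  have hpos : 0 < 1 + l * x := by nlinarith [neg_abs_le x, abs_nonneg x]
  calc exp (l * x - psi (-l) * x ^ 2) ≤ exp (l * x - psi (l * x)) := by
        gcongr; linarith [psi_mul_le hl0 hl1 hx]
    _ = 1 + l * x := by rw [psi, sub_sub_cancel, exp_log hpos]

lemma exp_mul_sub_psi_neg_mul_le_exp_abs {l z s : ℝ} (hl0 : 0 ≤ l) (hl1 : l < 1) (hs : 0 ≤ s) :
    exp (l * z - psi (-l) * s) ≤ exp |z| := by
  have : l * z ≤ |z| := by nlinarith [le_abs_self z, neg_abs_le z]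
  have := mul_nonneg (psi_nonneg (neg_lt_neg hl1)) hs
  gcongr; linarith

lemma psi_neg_mul_le {c l : ℝ} (hc0 : 0 ≤ c) (hc1 : c ≤ 1) (hl : l < 1) :
    psi (-(c * l)) ≤ c * psi (-l) := by
  have h := strictConcaveOn_log_Ioi.concaveOn.2 (x := 1 - l) (y := 1) (by simp; linarith)
    (by simp) hc0 (by linarith : 0 ≤ 1 - c) (by ring)
  simp only [smul_eq_mul, log_one, mul_one, mul_zero, add_zero] at h
  rw [show c * (1 - l) + (1 - c) = 1 + -(c * l) by ring] at h
  unfold psi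
  rw [show 1 + -l = 1 - l by ring]
  linarith

lemma psi_eq_mul_sub_psi_neg {y : ℝ} (hy : 0 < y) :
    psi y = y / (1 + y) * y - psi (-(y / (1 + y))) := by
  have : 1 + -(y / (1 + y)) = (1 + y)⁻¹ := by field_simp; ring
  rw [psi, psi, this, log_inv]
  field_simp; ring

lemma mul_psi_le_mul_sub_psi_neg {α y l : ℝ} (hα : 0 ≤ α) (hy : 0 < y)
    (hl : α * (y / (1 + y)) ≤ l) (hu : l ≤ y / (1 + y)) :
    α * psi y ≤ l * y - psi (-l) := by
  set l₀ := y / (1 + y)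
  have hl₀ : 0 < l₀ := by positivity
  have hl₀1 : l₀ < 1 := by rw [div_lt_one (by linarith)]; linarith
  obtain ⟨c, rfl⟩ : ∃ c, l = c * l₀ := ⟨l / l₀, (div_mul_cancel₀ _ hl₀.ne').symm⟩
  have hαc : α ≤ c := le_of_mul_le_mul_right (by linarith) hl₀
  have hc1 : c ≤ 1 := le_of_mul_le_mul_right (by linarith) hl₀
  have hconv := psi_neg_mul_le (hα.trans hαc) hc1 hl₀1
  have hpsi := psi_nonneg (x := y) (by linarith)
  rw [psi_eq_mul_sub_psi_neg hy] at hpsi ⊢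
  nlinarith

noncomputable def mixingMap (b u : ℝ) : ℝ := exp (b - b / u)

@[fun_prop]
lemma measurable_mixingMap (b : ℝ) : Measurable (mixingMap b) := by
  unfold mixingMap; fun_prop

lemma mixingMap_mem_Ioo {b u : ℝ} (hb : 0 < b) (hu : u ∈ Ioo (0 : ℝ) 1) :
    mixingMap b u ∈ Ioo (0 : ℝ) 1 := by
  refine ⟨exp_pos _, exp_lt_one_iff.2 ?_⟩
  have : b < b / u := by rw [lt_div_iff₀ hu.1]; nlinarith [hu.2]
  linarith

lemma mixingMap_mem_Icc {a b v u : ℝ} (ha : 0 ≤ a) (hb : 0 < b) (hv : 0 ≤ v)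
    (hu : u ∈ Icc (b / (a + b + v)) (b / (b + v))) :
    mixingMap b u ∈ Icc (exp (-(a + v))) (exp (-v)) := by
  obtain ⟨hu₁, hu₂⟩ := hu
  have hu0 : 0 < u := lt_of_lt_of_le (by positivity) hu₁
  have h₁ : b / u ≤ a + b + v := by
    rw [div_le_iff₀ hu0]; rw [div_le_iff₀ (by positivity)] at hu₁; linarith
  have h₂ : b + v ≤ b / u := by
    rw [le_div_iff₀ hu0]; rw [le_div_iff₀ (by positivity)] at hu₂; linarith
  exact ⟨exp_le_exp.2 (by linarith), exp_le_exp.2 (by linarith)⟩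

noncomputable def mixture (b z s : ℝ) : ℝ :=
  ∫ u in Ioo (0 : ℝ) 1, exp (mixingMap b u * z - psi (-mixingMap b u) * s)

lemma mixture_nonneg (b z s : ℝ) : 0 ≤ mixture b z s :=
  setIntegral_nonneg measurableSet_Ioo fun _ _ => (exp_pos _).le

lemma mixture_zero_zero (b : ℝ) : mixture b 0 0 = 1 := by
  simp [mixture]

lemma mul_exp_le_mixture {α b z s : ℝ} (hα0 : 0 < α) (hα1 : α < 1) (hb : 0 < b) (hz : 0 < z)
    (hs : 0 < s) :
    (b / (b + log (1 + s / z)) - b / (log (1 / α) + b + log (1 + s / z))) *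
      exp (α * s * psi (z / s)) ≤ mixture b z s := by
  set a := log (1 / α)
  set v := log (1 + s / z)
  have ha : 0 < a := log_pos (by rw [lt_div_iff₀ hα0]; linarith)
  have hv : 0 < v := log_pos (lt_add_of_pos_right 1 (by positivity))
  have hexp_a : exp (-a) = α := by rw [← log_inv, one_div, inv_inv, exp_log hα0]
  have hexp_v : exp (-v) = z / s / (1 + z / s) := by
    rw [← log_inv, exp_log (by positivity)]; field_simp; ring
  have hsub : Icc (b / (a + b + v)) (b / (b + v)) ⊆ Ioo 0 1 := fun u hu =>
    ⟨lt_of_lt_of_le (by positivity) hu.1,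
      lt_of_le_of_lt hu.2 ((div_lt_one (by positivity)).2 (by linarith))⟩
  have hle : ∀ u ∈ Icc (b / (a + b + v)) (b / (b + v)),
      exp (α * s * psi (z / s)) ≤ exp (mixingMap b u * z - psi (-mixingMap b u) * s) := by
    intro u hu
    obtain ⟨h₁, h₂⟩ := mixingMap_mem_Icc ha.le hb hv.le hu
    rw [neg_add, exp_add, hexp_a, hexp_v] at h₁
    rw [hexp_v] at h₂
    have := mul_psi_le_mul_sub_psi_neg hα0.le (by positivity) h₁ h₂
    gcongr
    calc α * s * psi (z / s) ≤ (mixingMap b u * (z / s) - psi (-mixingMap b u)) * s := by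
          nlinarith
      _ = _ := by field_simp
  have hint : IntegrableOn (fun u => exp (mixingMap b u * z - psi (-mixingMap b u) * s))
      (Ioo 0 1) := by
    refine .of_bound measure_Ioo_lt_top (by fun_prop) (exp |z|) ?_
    filter_upwards [ae_restrict_mem measurableSet_Ioo] with u hu
    obtain ⟨h0, h1⟩ := mixingMap_mem_Ioo hb hu
    rw [norm_of_nonneg (exp_pos _).le]
    exact exp_mul_sub_psi_neg_mul_le_exp_abs h0.le h1 hs.le
  calc _ = volume.real (Icc (b / (a + b + v)) (b / (b + v))) • exp (α * s * psi (z / s)) := by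
        rw [Real.volume_real_Icc_of_le (div_le_div_of_nonneg_left hb.le (by positivity) (by linarith)),
          smul_eq_mul]
    _ ≤ ∫ u in Icc (b / (a + b + v)) (b / (b + v)),
          exp (mixingMap b u * z - psi (-mixingMap b u) * s) :=
        setIntegral_ge_of_const_le measurableSet_Icc measure_Icc_lt_top.ne hle (hint.mono_set hsub)
    _ ≤ mixture b z s :=
        setIntegral_mono_set hint (.of_forall fun _ => (exp_pos _).le) hsub.eventuallyLE

lemma div_lt_sqrt_of_sqrt_lt {α z s : ℝ} (hα : 0 < α) (hs : 0 < s) (hz : sqrt (2 * s / α) < z) :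
    s / z < sqrt (α * s / 2) := by
  have hsqrt : sqrt (2 * s / α) * sqrt (α * s / 2) = s := by
    rw [← sqrt_mul (by positivity), show 2 * s / α * (α * s / 2) = s ^ 2 by field_simp,
      sqrt_sq hs.le]
  rw [div_lt_iff₀ (by linarith [sqrt_nonneg (2 * s / α)])]
  nlinarith [sqrt_pos.2 (show 0 < α * s / 2 by positivity)]

lemma psi_le_of_mixture_lt {α b δ z s : ℝ} (hα0 : 0 < α) (hα1 : α < 1) (hb : 0 < b)
    (hδ : 0 < δ) (hs : 0 < s) (hz : sqrt (2 * s / α) < z) (hM : mixture b z s < 2 / δ) :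
    z / s - log (1 + z / s) ≤ 1 / (α * s) *
      log ((b + log (1 / α) + log (1 + sqrt (α * s / 2))) ^ 2 / (0.5 * b * log (1 / α)) / δ) := by
  have hz0 : 0 < z := (sqrt_nonneg _).trans_lt hz
  set a := log (1 / α)
  set v := log (1 + s / z)
  set L := log (1 + sqrt (α * s / 2))
  have ha : 0 < a := log_pos (by rw [lt_div_iff₀ hα0]; linarith)
  have hv : 0 < v := log_pos (lt_add_of_pos_right 1 (by positivity))
  have hL : 0 ≤ L := log_nonneg (le_add_of_nonneg_right (sqrt_nonneg _))
  have hvL : v ≤ L := log_le_log (by have : 0 < s / z := div_pos hs hz0; linarith)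
    (by linarith [div_lt_sqrt_of_sqrt_lt hα0 hs hz])
  have hwidth : a * b / (b + a + L) ^ 2 ≤ b / (b + v) - b / (a + b + v) := by
    rw [div_sub_div _ _ (by positivity) (by positivity),
      show b * (a + b + v) - (b + v) * b = a * b by ring]
    exact div_le_div_of_nonneg_left (by positivity) (by positivity) (by nlinarith)
  have hexp : exp (α * s * psi (z / s)) < (b + a + L) ^ 2 / (0.5 * b * a) / δ := by
    have := (mul_le_mul_of_nonneg_right hwidth (exp_pos _).le).trans
      (mul_exp_le_mixture hα0 hα1 hb hz0 hs) |>.trans_lt hM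
    rw [show (b + a + L) ^ 2 / (0.5 * b * a) / δ = 2 / δ / (a * b / (b + a + L) ^ 2) by
      field_simp; ring]
    rw [lt_div_iff₀ (by positivity)]
    linarith
  rw [← lt_log_iff_exp_lt (by positivity), psi] at hexp
  rw [one_div, inv_mul_eq_div, le_div_iff₀ (by positivity)]
  linarith

lemma abs_le_or_psi_le_of_mixture_lt {α b δ z s : ℝ} (hα0 : 0 < α) (hα1 : α < 1) (hb : 0 < b)
    (hδ : 0 < δ) (hs : 0 < s) (hpos : mixture b z s < 2 / δ) (hneg : mixture b (-z) s < 2 / δ) :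
    |z| ≤ sqrt (2 * s / α) ∨ |z| / s - log (1 + |z| / s) ≤ 1 / (α * s) *
      log ((b + log (1 / α) + log (1 + sqrt (α * s / 2))) ^ 2 / (0.5 * b * log (1 / α)) / δ) := by
  refine or_iff_not_imp_left.2 fun hz => psi_le_of_mixture_lt hα0 hα1 hb hδ hs (not_le.1 hz) ?_
  rcases abs_choice z with h | h <;> rwa [h]

section ExpSupermartingale

variable {Ω : Type*} {g : ℕ → Ω → ℝ}

def partialSum (g : ℕ → Ω → ℝ) (t : ℕ) (ω : Ω) : ℝ := ∑ i ∈ range t, g (i + 1) ω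

def quadVar (g : ℕ → Ω → ℝ) (t : ℕ) (ω : Ω) : ℝ := ∑ i ∈ range t, g (i + 1) ω ^ 2

noncomputable def expProcess (g : ℕ → Ω → ℝ) (l : ℝ) (t : ℕ) (ω : Ω) : ℝ :=
  exp (l * partialSum g t ω - psi (-l) * quadVar g t ω)

lemma partialSum_neg (g : ℕ → Ω → ℝ) (t : ℕ) (ω : Ω) :
    partialSum (-g) t ω = -partialSum g t ω := by
  simp [partialSum]

lemma quadVar_neg (g : ℕ → Ω → ℝ) (t : ℕ) (ω : Ω) : quadVar (-g) t ω = quadVar g t ω := by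
  simp [quadVar]

lemma quadVar_nonneg (g : ℕ → Ω → ℝ) (t : ℕ) (ω : Ω) : 0 ≤ quadVar g t ω :=
  sum_nonneg fun _ _ => sq_nonneg _

lemma abs_partialSum_le {ω : Ω} (hg : ∀ t, |g (t + 1) ω| ≤ 1) (t : ℕ) :
    |partialSum g t ω| ≤ t :=
  (abs_sum_le_sum_abs _ _).trans <| by simpa using sum_le_sum fun i (_ : i ∈ range t) => hg i

lemma expProcess_succ (g : ℕ → Ω → ℝ) (l : ℝ) (t : ℕ) :
    expProcess g l (t + 1) = expProcess g l t *
      fun ω => exp (l * g (t + 1) ω - psi (-l) * g (t + 1) ω ^ 2) := by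
  ext ω
  simp only [expProcess, partialSum, quadVar, sum_range_succ, Pi.mul_apply, ← exp_add]
  ring_nf

lemma expProcess_le_exp {l : ℝ} (hl0 : 0 ≤ l) (hl1 : l < 1) {ω : Ω}
    (hg : ∀ t, |g (t + 1) ω| ≤ 1) (t : ℕ) : expProcess g l t ω ≤ exp t :=
  (exp_mul_sub_psi_neg_mul_le_exp_abs hl0 hl1 (quadVar_nonneg g t ω)).trans
    (exp_le_exp.2 (abs_partialSum_le hg t))

variable {m0 : MeasurableSpace Ω} {μ : Measure Ω}

lemma integrable_exp_mul_sub_psi_neg_mul_sq [IsFiniteMeasure μ] {h : Ω → ℝ}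
    (hmeas : AEMeasurable h μ) (hbdd : ∀ᵐ ω ∂μ, |h ω| ≤ 1) {l : ℝ} (hl0 : 0 ≤ l) (hl1 : l < 1) :
    Integrable (fun ω => exp (l * h ω - psi (-l) * h ω ^ 2)) μ := by
  refine .of_bound (by fun_prop) 2 ?_
  filter_upwards [hbdd] with ω hω
  rw [norm_of_nonneg (exp_pos _).le]
  nlinarith [le_abs_self (h ω), exp_mul_sub_psi_neg_mul_sq_le hl0 hl1 hω]

lemma condExp_exp_mul_sub_psi_neg_mul_sq_le_one [IsFiniteMeasure μ] {m : MeasurableSpace Ω}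
    (hm : m ≤ m0) {h : Ω → ℝ} (hmeas : AEMeasurable h μ) (hbdd : ∀ᵐ ω ∂μ, |h ω| ≤ 1)
    (hzero : μ[h|m] =ᵐ[μ] 0) {l : ℝ} (hl0 : 0 ≤ l) (hl1 : l < 1) :
    μ[fun ω => exp (l * h ω - psi (-l) * h ω ^ 2)|m] ≤ᵐ[μ] 1 := by
  have hle : ∀ᵐ ω ∂μ, exp (l * h ω - psi (-l) * h ω ^ 2) ≤ 1 + l * h ω := by
    filter_upwards [hbdd] with ω hω using exp_mul_sub_psi_neg_mul_sq_le hl0 hl1 hω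
  have hint : Integrable h μ :=
    .of_bound hmeas.aestronglyMeasurable 1 (by simpa only [norm_eq_abs] using hbdd)
  have hlin : μ[(fun _ => (1 : ℝ)) + l • h|m] =ᵐ[μ] 1 := by
    filter_upwards [condExp_add (integrable_const (1 : ℝ)) (hint.smul l) m, condExp_smul l h m,
      hzero] with ω hadd hsmul hω
    rw [hadd, Pi.add_apply, hsmul, condExp_const hm]
    simp [hω]
  filter_upwards [condExp_mono (m := m) (integrable_exp_mul_sub_psi_neg_mul_sq hmeas hbdd hl0 hl1)
    ((integrable_const 1).add (hint.smul l)) hle, hlin] with ω hmono hω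
  exact hmono.trans hω.le

variable (ℱ : Filtration ℕ m0)

lemma stronglyAdapted_partialSum (hg : ∀ t, StronglyMeasurable[ℱ (t + 1)] (g (t + 1))) :
    StronglyAdapted ℱ (partialSum g) := fun _ =>
  Finset.stronglyMeasurable_fun_sum _ fun i hi => (hg i).mono (ℱ.mono (mem_range.1 hi))

lemma stronglyAdapted_quadVar (hg : ∀ t, StronglyMeasurable[ℱ (t + 1)] (g (t + 1))) :
    StronglyAdapted ℱ (quadVar g) := fun _ =>
  Finset.stronglyMeasurable_fun_sum _ fun i hi => ((hg i).mono (ℱ.mono (mem_range.1 hi))).pow 2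

lemma measurable_expProcess_prod (hg : ∀ t, StronglyMeasurable[ℱ (t + 1)] (g (t + 1)))
    {ι : Type*} {mι : MeasurableSpace ι} {L : ι → ℝ} (hL : Measurable L) (t : ℕ) :
    Measurable[(ℱ t).prod mι] fun p : Ω × ι => expProcess g (L p.2) t p.1 := by
  let := ℱ t
  have := (stronglyAdapted_partialSum ℱ hg t).measurable
  have := (stronglyAdapted_quadVar ℱ hg t).measurable
  unfold expProcess
  fun_prop

theorem supermartingale_expProcess [IsFiniteMeasure μ]
    (hg : ∀ t, StronglyMeasurable[ℱ (t + 1)] (g (t + 1)))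
    (hbdd : ∀ᵐ ω ∂μ, ∀ t, |g (t + 1) ω| ≤ 1) (hmds : ∀ t, μ[g (t + 1)|ℱ t] =ᵐ[μ] 0)
    {l : ℝ} (hl0 : 0 ≤ l) (hl1 : l < 1) : Supermartingale (expProcess g l) ℱ μ := by
  have hadapted : StronglyAdapted ℱ (expProcess g l) := fun t =>
    ((((stronglyAdapted_partialSum ℱ hg t).measurable.const_mul l).sub
      ((stronglyAdapted_quadVar ℱ hg t).measurable.const_mul _)).exp).stronglyMeasurable
  have hint : ∀ t, Integrable (expProcess g l t) μ := fun t =>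
    .of_bound ((hadapted t).mono (ℱ.le t)).aestronglyMeasurable (exp t) <| by
      filter_upwards [hbdd] with ω hω
      exact (norm_of_nonneg (exp_pos _).le).trans_le (expProcess_le_exp hl0 hl1 hω t)
  refine supermartingale_nat hadapted hint fun t => ?_
  have hgt : Measurable (g (t + 1)) := ((hg t).mono (ℱ.le (t + 1))).measurable
  have hgt_bdd : ∀ᵐ ω ∂μ, |g (t + 1) ω| ≤ 1 := by filter_upwards [hbdd] with ω hω using hω t
  have hprod_int : Integrable (expProcess g l (t + 1)) μ := hint (t + 1)
  rw [expProcess_succ] at hprod_int ⊢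
  filter_upwards [condExp_mul_of_stronglyMeasurable_left (hadapted t) hprod_int
      (integrable_exp_mul_sub_psi_neg_mul_sq hgt.aemeasurable hgt_bdd hl0 hl1),
    condExp_exp_mul_sub_psi_neg_mul_sq_le_one (ℱ.le t) hgt.aemeasurable hgt_bdd (hmds t) hl0 hl1]
    with ω hpull hω
  rw [hpull, Pi.mul_apply]
  exact mul_le_of_le_one_right (exp_pos _).le hω

theorem supermartingale_mixture_expProcess [IsFiniteMeasure μ]
    (hg : ∀ t, StronglyMeasurable[ℱ (t + 1)] (g (t + 1)))
    (hbdd : ∀ᵐ ω ∂μ, ∀ t, |g (t + 1) ω| ≤ 1) (hmds : ∀ t, μ[g (t + 1)|ℱ t] =ᵐ[μ] 0)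
    {b : ℝ} (hb : 0 < b) :
    Supermartingale (fun t ω => mixture b (partialSum g t ω) (quadVar g t ω)) ℱ μ := by
  refine supermartingale_mixture (F := fun u => expProcess g (mixingMap b u)) ?_
    (measurable_expProcess_prod ℱ hg (measurable_mixingMap b)) fun t => ⟨exp t, ?_⟩
  · filter_upwards [ae_restrict_mem measurableSet_Ioo] with u hu
    obtain ⟨h0, h1⟩ := mixingMap_mem_Ioo hb hu
    exact supermartingale_expProcess ℱ hg hbdd hmds h0.le h1
  · filter_upwards [hbdd] with ω hω
    filter_upwards [ae_restrict_mem measurableSet_Ioo] with u hu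
    obtain ⟨h0, h1⟩ := mixingMap_mem_Ioo hb hu
    exact (abs_of_pos (exp_pos _)).trans_le (expProcess_le_exp h0.le h1 hω t)

lemma measure_exists_le_mixture_le [IsProbabilityMeasure μ]
    (hg : ∀ t, StronglyMeasurable[ℱ (t + 1)] (g (t + 1)))
    (hbdd : ∀ᵐ ω ∂μ, ∀ t, |g (t + 1) ω| ≤ 1) (hmds : ∀ t, μ[g (t + 1)|ℱ t] =ᵐ[μ] 0)
    {b c : ℝ} (hb : 0 < b) (hc : 0 < c) :
    μ {ω | ∃ t, c ≤ mixture b (partialSum g t ω) (quadVar g t ω)} ≤ ENNReal.ofReal (1 / c) := by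
  have := (supermartingale_mixture_expProcess ℱ hg hbdd hmds hb).ville
    (fun _ _ => mixture_nonneg _ _ _) hc
  simpa [partialSum, quadVar, mixture_zero_zero] using this

end ExpSupermartingale

end MartingaleConcentration

open MartingaleConcentration

/-- First bound of the main concentration theorem: for a martingale difference sequence
`(g_{t+1})` with `|g_{t+1}| ≤ 1` a.s., with probability at least `1 − δ`,
simultaneously for all `t ≥ 1` with `S_t = Σ_{i<t} g_{i+1}² > 0`: either
`|Σ_{i<t} g_{i+1}| ≤ √(2S_t/α)`, or `Ψ(|Σ g|/S_t) ≤ (1/(α S_t))·log(A_t/δ)`, where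
`A_t = (log γ + log(1/α) + log(1 + √(α S_t/2)))²/(0.5·log γ·log(1/α))` and
`Ψ(x) = x − log(1+x)`. -/
theorem concentration_psi_inverse {Ω : Type*} {m0 : MeasurableSpace Ω}
    {μ : Measure Ω} [IsProbabilityMeasure μ] (ℱ : Filtration ℕ m0)
    (γ α δ : ℝ) (hγ : 1 < γ) (hα : α ∈ Set.Ioo (0 : ℝ) 1) (hδ : δ ∈ Set.Ioo (0 : ℝ) 1)
    (g : ℕ → Ω → ℝ)
    (hgadapted : ∀ t, StronglyMeasurable[ℱ (t + 1)] (g (t + 1)))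
    (hgbdd : ∀ t, ∀ᵐ ω ∂μ, |g (t + 1) ω| ≤ 1)
    (hmds : ∀ t, μ[g (t + 1) | ℱ t] =ᵐ[μ] 0) :
    ENNReal.ofReal (1 - δ) ≤
      μ {ω | ∀ t : ℕ, 1 ≤ t →
          ∀ Z S A : ℝ, Z = ∑ i ∈ Finset.range t, g (i + 1) ω →
            S = ∑ i ∈ Finset.range t, (g (i + 1) ω) ^ 2 →
            A = (Real.log γ + Real.log (1 / α) + Real.log (1 + Real.sqrt (α * S / 2))) ^ 2
                  / (0.5 * Real.log γ * Real.log (1 / α)) →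
            0 < S →
            |Z| ≤ Real.sqrt (2 * S / α) ∨
              |Z| / S - Real.log (1 + |Z| / S) ≤ (1 / (α * S)) * Real.log (A / δ)} := by
  have hbdd : ∀ᵐ ω ∂μ, ∀ t, |g (t + 1) ω| ≤ 1 := ae_all_iff.2 hgbdd
  have hb : 0 < log γ := log_pos hγ
  have hc : 0 < 2 / δ := div_pos two_pos hδ.1
  have hbad := measure_exists_le_mixture_le ℱ hgadapted hbdd hmds hb hc
  have hbad_neg := measure_exists_le_mixture_le ℱ (g := -g) (fun t => (hgadapted t).neg)
    (by filter_upwards [hbdd] with ω hω t using (abs_neg _).trans_le (hω t))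
    (fun t => (condExp_neg _ _).trans (by filter_upwards [hmds t] with ω hω using by simp [hω]))
    hb hc
  simp only [partialSum_neg, quadVar_neg] at hbad_neg
  refine ofReal_one_sub_le_measure hδ.1.le <| (measure_mono (compl_subset_comm.2 ?_)).trans <|
    (measure_union_le _ _).trans <| (add_le_add hbad hbad_neg).trans ?_
  · intro ω hω t _ Z S A hZ hS hA hSpos
    simp only [mem_compl_iff, mem_union, mem_ofPred_eq, not_or, not_exists, not_le] at hω
    subst hZ hS hA
    exact abs_le_or_psi_le_of_mixture_lt hα.1 hα.2 hb hδ.1 hSpos (hω.1 t) (hω.2 t)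
  · rw [← ENNReal.ofReal_add (by positivity) (by positivity)]
    exact ENNReal.ofReal_le_ofReal (by field_simp; linarith)
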